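/- Given two cycles C_n and C'_m and edges uv ∈ E(C_n), u'v' ∈ E(C'_m), the graph obtained by identifying uv with u'v' (merging u with u' and v with v') belongs to c-AND(1). -/

import Mathlib

/-- An `AND(1)`-realization of `G`: each vertex `v` gets a closed interval
`[L v, R v]` and a representative point `p v` in it, with adjacency of distinct
vertices iff mutual containment of the representative points. -/
def IsAND1Real {V : Type*} (G : SimpleGraph V) (L R p : V → ℝ) : Prop :=
  (∀ v, L v ≤ p v ∧ p v ≤ R v) ∧
    ∀ u v : V, u ≠ v →
      (G.Adj u v ↔ L u ≤ p v ∧ p v ≤ R u ∧ L v ≤ p u ∧ p u ≤ R v)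

/-- A central (`c`-)`AND(1)`-realization: moreover each representative point is
the midpoint of its interval. -/
def IsCAND1Real {V : Type*} (G : SimpleGraph V) (L R p : V → ℝ) : Prop :=
  IsAND1Real G L R p ∧ ∀ v, p v = (L v + R v) / 2

/-- The class `AND(1)`. -/
def InAND1 {V : Type*} (G : SimpleGraph V) : Prop :=
  ∃ L R p : V → ℝ, IsAND1Real G L R p

/-- The class `c-AND(1)`. -/
def InCAND1 {V : Type*} (G : SimpleGraph V) : Prop :=
  ∃ L R p : V → ℝ, IsCAND1Real G L R p

/-- A linear ordering of the vertices (an injective map to `ℝ`) satisfying the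
four point condition: `x < u < v < y` with `xv, uy ∈ E` implies `uv ∈ E`. -/
def FourPointCond {V : Type*} (G : SimpleGraph V) (f : V → ℝ) : Prop :=
  Function.Injective f ∧
    ∀ x u v y : V, f x < f u → f u < f v → f v < f y →
      G.Adj x v → G.Adj u y → G.Adj u v

/-- The graph obtained from the disjoint union of `G₁` and `G₂` by identifying
the edge `uv` of `G₁` with the edge `u'v'` of `G₂` (merging `u` with `u'` and
`v` with `v'`). -/
def glueEdge {V₁ V₂ : Type*} (G₁ : SimpleGraph V₁) (G₂ : SimpleGraph V₂)
    (u v : V₁) (u' v' : V₂) :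
    SimpleGraph (V₁ ⊕ {x : V₂ // x ≠ u' ∧ x ≠ v'}) where
  Adj a b := match a, b with
    | .inl a, .inl b => G₁.Adj a b
    | .inr a, .inr b => G₂.Adj a b
    | .inl a, .inr b => (a = u ∧ G₂.Adj u' b) ∨ (a = v ∧ G₂.Adj v' b)
    | .inr a, .inl b => (b = u ∧ G₂.Adj u' a) ∨ (b = v ∧ G₂.Adj v' a)
  symm := by
    refine ⟨?_⟩
    rintro (a | a) (b | b) h <;> simp_all [SimpleGraph.adj_comm]
  loopless := by refine ⟨?_⟩; rintro (a | a) h <;> simp_all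

/-!
After a rotation or reflection of each cycle we may assume `u = 0`, `v = n - 1`, `u' = 0` and
`v' = 1`. A c-AND(1) realization amounts to a centre `p` and a radius `r ≥ 0` per vertex, with
`a ~ b` iff `|p a - p b| ≤ min (r a) (r b)`. Put vertex `i` of the first cycle at `i` with
radius `1`, and vertex `j ≥ 2` of the second cycle at `j (n - 1)` with radius `n - 1`: along
the path `u, 1, …, v, 2, …, m - 1` exactly the consecutive vertices are then adjacent. The two
remaining edges, `uv` and `u' (m - 1)`, come from raising the radius of `v` to `n - 1` and
those of `u` and `m - 1` to their distance `(m - 1) (n - 1)`.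
-/
open SimpleGraph

section Realization

variable {V W : Type*} {G : SimpleGraph V} {H : SimpleGraph W}

theorem inCAND1_of_center_radius (p r : V → ℝ) (hr : ∀ v, 0 ≤ r v)
    (hadj : ∀ a b, a ≠ b → p a ≤ p b → (G.Adj a b ↔ p b - p a ≤ min (r a) (r b))) :
    InCAND1 G := by
  have hinterval : ∀ a b, a ≠ b → p a ≤ p b → (G.Adj a b ↔
      p a - r a ≤ p b ∧ p b ≤ p a + r a ∧ p b - r b ≤ p a ∧ p a ≤ p b + r b) := by
    intro a b hab hle
    rw [hadj a b hab hle, le_min_iff]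
    have := hr a
    have := hr b
    constructor
    · rintro ⟨h₁, h₂⟩
      refine ⟨?_, ?_, ?_, ?_⟩ <;> linarith
    · rintro ⟨-, h₂, h₃, -⟩
      constructor <;> linarith
  refine ⟨p - r, p + r, p, ⟨fun v => ?_, fun a b hab => ?_⟩, fun v => ?_⟩
  · simp [hr v]
  · rcases le_total (p a) (p b) with h | h
    · exact hinterval a b hab h
    · rw [G.adj_comm, hinterval b a hab.symm h]
      simp only [Pi.sub_apply, Pi.add_apply]
      tauto
  · simp only [Pi.sub_apply, Pi.add_apply]
    ring

theorem inCAND1_of_nat_center_radius (p r : V → ℕ)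
    (hadj : ∀ a b, a ≠ b → p a ≤ p b → (G.Adj a b ↔ p b ≤ p a + min (r a) (r b))) :
    InCAND1 G := by
  refine inCAND1_of_center_radius (fun v => p v) (fun v => r v) (fun v => Nat.cast_nonneg _)
    fun a b hab hle => ?_
  rw [hadj a b hab (by exact_mod_cast hle), ← Nat.cast_min, sub_le_iff_le_add']
  norm_cast

theorem InCAND1.of_iso (h : InCAND1 G) (e : G ≃g H) : InCAND1 H := by
  obtain ⟨L, R, p, ⟨hmem, hadj⟩, hmid⟩ := h
  refine ⟨L ∘ e.symm, R ∘ e.symm, p ∘ e.symm, ⟨fun w => hmem _, fun a b hab => ?_⟩,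
    fun w => hmid _⟩
  exact e.symm.map_adj_iff.symm.trans (hadj _ _ (e.symm.injective.ne hab))

end Realization

section GlueEdge

variable {V₁ V₂ W₁ W₂ : Type*} {G₁ : SimpleGraph V₁} {G₂ : SimpleGraph V₂}
  {H₁ : SimpleGraph W₁} {H₂ : SimpleGraph W₂} {u v : V₁} {u' v' : V₂}

@[simp] lemma glueEdge_adj_inl_inl {a b : V₁} :
    (glueEdge G₁ G₂ u v u' v').Adj (.inl a) (.inl b) ↔ G₁.Adj a b := Iff.rfl

@[simp] lemma glueEdge_adj_inr_inr {a b : {x : V₂ // x ≠ u' ∧ x ≠ v'}} :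
    (glueEdge G₁ G₂ u v u' v').Adj (.inr a) (.inr b) ↔ G₂.Adj a b := Iff.rfl

@[simp] lemma glueEdge_adj_inl_inr {a : V₁} {b : {x : V₂ // x ≠ u' ∧ x ≠ v'}} :
    (glueEdge G₁ G₂ u v u' v').Adj (.inl a) (.inr b) ↔
      a = u ∧ G₂.Adj u' b ∨ a = v ∧ G₂.Adj v' b := Iff.rfl

@[simp] lemma glueEdge_adj_inr_inl {a : V₁} {b : {x : V₂ // x ≠ u' ∧ x ≠ v'}} :
    (glueEdge G₁ G₂ u v u' v').Adj (.inr b) (.inl a) ↔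
      a = u ∧ G₂.Adj u' b ∨ a = v ∧ G₂.Adj v' b := Iff.rfl

def SimpleGraph.Iso.glueEdge (φ : G₁ ≃g H₁) (ψ : G₂ ≃g H₂) (u v : V₁) (u' v' : V₂) :
    _root_.glueEdge G₁ G₂ u v u' v' ≃g _root_.glueEdge H₁ H₂ (φ u) (φ v) (ψ u') (ψ v') where
  toEquiv := Equiv.sumCongr φ.toEquiv <|
    ψ.toEquiv.subtypeEquiv fun x => by simp [ψ.injective.ne_iff]
  map_rel_iff' := by
    rintro (a | a) (b | b) <;> simp [φ.injective.eq_iff, Iso.map_adj_iff]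

end GlueEdge

section CycleGraph

theorem cycleGraph_adj_iff_val {n : ℕ} (hn : 2 ≤ n) {a b : Fin n} :
    (cycleGraph n).Adj a b ↔ a.val + 1 = b.val ∨ b.val + 1 = a.val ∨
      (a.val = 0 ∧ b.val + 1 = n) ∨ (b.val = 0 ∧ a.val + 1 = n) := by
  have ha := a.isLt
  have hb := b.isLt
  rw [cycleGraph_adj']
  rcases lt_trichotomy b a with h | rfl | h
  · rw [Fin.coe_sub_iff_le.2 h.le, Fin.coe_sub_iff_lt.2 h]
    omega
  · rw [Fin.coe_sub_iff_le.2 le_rfl]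
    omega
  · rw [Fin.coe_sub_iff_lt.2 h, Fin.coe_sub_iff_le.2 h.le]
    omega

def cycleGraphAddRight {n : ℕ} [NeZero n] (c : Fin n) : cycleGraph n ≃g cycleGraph n where
  toEquiv := Equiv.addRight c
  map_rel_iff' := by simp [cycleGraph_adj']

def cycleGraphSubLeft {n : ℕ} [NeZero n] (c : Fin n) : cycleGraph n ≃g cycleGraph n where
  toEquiv := Equiv.subLeft c
  map_rel_iff' := by simp [cycleGraph_adj', or_comm]

theorem exists_cycleGraph_iso_of_adj {n : ℕ} [NeZero n] {u v x y : Fin n}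
    (huv : (cycleGraph n).Adj u v) (hxy : (cycleGraph n).Adj x y) :
    ∃ φ : cycleGraph n ≃g cycleGraph n, φ u = x ∧ φ v = y := by
  have hdiff : v - u = y - x ∨ u - v = y - x := by
    rw [cycleGraph_adj'] at huv hxy
    rcases huv with h | h <;> rcases hxy with h' | h'
    · exact Or.inl (by rw [← neg_sub u v, ← neg_sub x y, Fin.ext (h.trans h'.symm)])
    · exact Or.inr (Fin.ext (h.trans h'.symm))
    · exact Or.inr (by rw [← neg_sub v u, ← neg_sub x y, Fin.ext (h.trans h'.symm)])
    · exact Or.inl (Fin.ext (h.trans h'.symm))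
  rcases hdiff with h | h
  · exact ⟨cycleGraphAddRight (x - u), add_sub_cancel u x,
      show v + (x - u) = y by rw [← sub_add_cancel y x, ← h]; abel⟩
  · exact ⟨cycleGraphSubLeft (x + u), add_sub_cancel_right x u,
      show x + u - v = y by rw [← sub_add_cancel y x, ← h]; abel⟩

end CycleGraph

theorem two_le_val_of_ne_zero_of_ne_one {l : ℕ} {b : Fin (l + 2)} (h₀ : b ≠ 0) (h₁ : b ≠ 1) :
    2 ≤ b.val := by
  rw [Ne, Fin.ext_iff, Fin.val_zero] at h₀
  rw [Ne, Fin.ext_iff, Fin.val_one] at h₁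
  omega

theorem inCAND1_glueEdge_cycleGraph_zero_last {k l : ℕ} (hk : 2 ≤ k) (hl : 1 ≤ l) :
    InCAND1 (glueEdge (cycleGraph (k + 1)) (cycleGraph (l + 2)) 0 (Fin.last k) 0 1) := by
  have hlk : 2 * k ≤ (l + 1) * k := Nat.mul_le_mul_right k (by omega)
  refine inCAND1_of_nat_center_radius
    (Sum.elim (fun a => a.val) (fun b => b.1.val * k))
    (Sum.elim (fun a => if a.val = 0 then (l + 1) * k else if a.val = k then k else 1)
      (fun b => if b.1.val = l + 1 then (l + 1) * k else k)) ?_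
  rintro (a | a) (b | b) hab hle
  · have hab' : a.val ≠ b.val := fun h => hab (congrArg Sum.inl (Fin.ext h))
    have := a.isLt
    have := b.isLt
    simp only [glueEdge_adj_inl_inl, Sum.elim_inl, cycleGraph_adj_iff_val (by omega : 2 ≤ k + 1),
      min_def] at hle ⊢
    split_ifs <;> omega
  · have hb := two_le_val_of_ne_zero_of_ne_one b.2.1 b.2.2
    have hbl := Nat.lt_succ_iff.1 b.1.isLt
    have h₁ : 2 * k ≤ b.1.val * k := Nat.mul_le_mul_right k hb
    have h₂ : b.1.val * k ≤ (l + 1) * k := Nat.mul_le_mul_right k hbl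
    have h₃ : b.1.val * k ≤ 2 * k ↔ b.1.val ≤ 2 := Nat.mul_le_mul_right_iff (by omega)
    have := a.isLt
    simp only [glueEdge_adj_inl_inr, Sum.elim_inl, Sum.elim_inr, Fin.ext_iff, Fin.val_zero,
      Fin.val_last, cycleGraph_adj_iff_val (by omega : 2 ≤ l + 2), Fin.val_one, min_def,
      true_and, false_and, false_or, Nat.add_one_ne_zero, one_ne_zero]
    split_ifs <;> omega
  · have h₁ : 2 * k ≤ a.1.val * k :=
      Nat.mul_le_mul_right k (two_le_val_of_ne_zero_of_ne_one a.2.1 a.2.2)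
    have := b.isLt
    simp only [Sum.elim_inl, Sum.elim_inr] at hle
    omega
  · have ha := two_le_val_of_ne_zero_of_ne_one a.2.1 a.2.2
    have hb := two_le_val_of_ne_zero_of_ne_one b.2.1 b.2.2
    have hab' : a.1.val ≠ b.1.val := fun h => hab (congrArg Sum.inr (Subtype.ext (Fin.ext h)))
    have h₁ : a.1.val * k ≤ b.1.val * k ↔ a.1.val ≤ b.1.val := Nat.mul_le_mul_right_iff (by omega)
    have h₂ : b.1.val * k ≤ (a.1.val + 1) * k ↔ b.1.val ≤ a.1.val + 1 :=
      Nat.mul_le_mul_right_iff (by omega)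
    rw [add_one_mul] at h₂
    simp only [glueEdge_adj_inr_inr, Sum.elim_inr, cycleGraph_adj_iff_val (by omega : 2 ≤ l + 2),
      min_def] at hle ⊢
    split_ifs <;> omega

/-- The graph obtained by identifying an edge of the cycle `Cₙ` with an edge
of the cycle `Cₘ` belongs to `c-AND(1)`. -/
theorem glue_cycles_mem_cand1 (n m : ℕ) (hn : 3 ≤ n) (hm : 3 ≤ m)
    (u v : Fin n) (u' v' : Fin m)
    (huv : (SimpleGraph.cycleGraph n).Adj u v)
    (huv' : (SimpleGraph.cycleGraph m).Adj u' v') :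
    InCAND1 (glueEdge (SimpleGraph.cycleGraph n) (SimpleGraph.cycleGraph m)
      u v u' v') := by
  obtain ⟨k, rfl⟩ : ∃ k, n = k + 1 := ⟨n - 1, by omega⟩
  obtain ⟨l, rfl⟩ : ∃ l, m = l + 2 := ⟨m - 2, by omega⟩
  have h₀ : (cycleGraph (k + 1)).Adj 0 (Fin.last k) := by
    rw [cycleGraph_adj_iff_val (by omega)]
    simp
  have h₁ : (cycleGraph (l + 2)).Adj 0 1 := cycleGraph_adj.2 (Or.inr (sub_zero 1))
  obtain ⟨φ, rfl, rfl⟩ := exists_cycleGraph_iso_of_adj h₀ huv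
  obtain ⟨ψ, rfl, rfl⟩ := exists_cycleGraph_iso_of_adj h₁ huv'
  exact (inCAND1_glueEdge_cycleGraph_zero_last (by omega) (by omega)).of_iso
    (φ.glueEdge ψ _ _ _ _)
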